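/- For every prime p, the equation x² − 34·y² = −1 has a solution with x, y ∈ ℤ_p, and it has a real solution; hence x² − 34y² = −1 violates the integral Hasse principle. -/

import Mathlib

/-!
The conic `x² − 34y² = −z²` has the rational points `(5, 1, 3)` and `(3, 1, 5)`. Since
`2 · 3 − 5 = 1`, one of `3`, `5` is a unit in any local ring, such as `ℤ_p` or `ℝ`, so one of
these points gives a solution there. Over `ℤ` there is none: multiplying `x + y√34` by the
norm-one unit `35 − 6√34` turns a solution with `x ≥ 0, y > 0` into one with a smaller `y ≥ 0`,
and `y = 0` is impossible.
-/

theorem exists_sq_sub_mul_sq_eq_neg_one_of_isUnit {R : Type*} [CommRing R] {d a b c : R}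
    (hc : IsUnit c) (h : a ^ 2 - d * b ^ 2 = -c ^ 2) : ∃ x y : R, x ^ 2 - d * y ^ 2 = -1 := by
  obtain ⟨u, rfl⟩ := hc
  refine ⟨a * ↑u⁻¹, b * ↑u⁻¹, ?_⟩
  linear_combination (↑u⁻¹ : R) ^ 2 * h - (u * ↑u⁻¹ + 1 : R) * u.mul_inv

theorem IsLocalRing.isUnit_three_or_isUnit_five (R : Type*) [CommRing R] [IsLocalRing R] :
    IsUnit (3 : R) ∨ IsUnit (5 : R) := by
  have h : (2 * 3 : R) + -5 = 1 := by norm_num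
  exact (isUnit_or_isUnit_of_add_one h).imp isUnit_of_mul_isUnit_right (IsUnit.neg_iff _).mp

theorem IsLocalRing.exists_sq_sub_34_mul_sq_eq_neg_one (R : Type*) [CommRing R] [IsLocalRing R] :
    ∃ x y : R, x ^ 2 - 34 * y ^ 2 = -1 := by
  rcases isUnit_three_or_isUnit_five R with h3 | h5
  · exact exists_sq_sub_mul_sq_eq_neg_one_of_isUnit (a := 5) (b := 1) h3 (by norm_num)
  · exact exists_sq_sub_mul_sq_eq_neg_one_of_isUnit (a := 3) (b := 1) h5 (by norm_num)

theorem sq_sub_34_mul_sq_descent {x y : ℤ} (h : x ^ 2 - 34 * y ^ 2 = -1) (hx : 0 ≤ x)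
    (hy : 0 < y) :
    (35 * x - 204 * y) ^ 2 - 34 * (35 * y - 6 * x) ^ 2 = -1 ∧
      0 ≤ 35 * y - 6 * x ∧ 35 * y - 6 * x < y :=
  ⟨by linear_combination h, by nlinarith, by nlinarith⟩

theorem not_exists_int_sq_sub_34_mul_sq_eq_neg_one :
    ¬ ∃ x y : ℤ, x ^ 2 - 34 * y ^ 2 = -1 := by
  rintro ⟨x, y, h⟩
  induction hn : y.natAbs using Nat.strong_induction_on generalizing x y with
  | _ n ih =>
  rcases eq_or_ne y 0 with rfl | hy
  · nlinarith [sq_nonneg x]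
  · obtain ⟨h', hnonneg, hlt⟩ := sq_sub_34_mul_sq_descent (x := |x|) (y := |y|)
      (by simpa only [sq_abs]) (abs_nonneg x) (abs_pos.mpr hy)
    exact ih _ (by have := Int.abs_eq_natAbs y; omega) _ _ h' rfl

/-- The equation `x² − 34·y² = −1` has a solution in `ℤ_p` for every prime `p`
and a solution in `ℝ`, but no solution in `ℤ`: it violates the integral Hasse
principle. -/
theorem neg_pell_34_violates_integral_Hasse_principle :
    (∀ (p : ℕ) (_ : Fact p.Prime), ∃ x y : ℤ_[p], x ^ 2 - 34 * y ^ 2 = -1) ∧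
    (∃ x y : ℝ, x ^ 2 - 34 * y ^ 2 = -1) ∧
    ¬ ∃ x y : ℤ, x ^ 2 - 34 * y ^ 2 = -1 :=
  ⟨fun p _ => IsLocalRing.exists_sq_sub_34_mul_sq_eq_neg_one ℤ_[p],
    IsLocalRing.exists_sq_sub_34_mul_sq_eq_neg_one ℝ, not_exists_int_sq_sub_34_mul_sq_eq_neg_one⟩
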